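/- arXiv:1108.5647 — 3 statements merged into one kernel-verified Lean document; each statement's English description precedes it below -/
import Mathlib

section
/- Let N > 1 and let X be an N×N Hermitian matrix with Frobenius norm at most 1. Then X can be written as a finite linear combination X = Σ_x λ_x X_x where each X_x is a normalized projector (an orthogonal projector divided by the square root of its rank) and Σ_x |λ_x| ≤ 4√(ln N). -/
open Matrix
/-- The Frobenius norm of a complex matrix. -/
noncomputable def frobNorm {N : ℕ} (A : Matrix (Fin N) (Fin N) ℂ) : ℝ :=
  Real.sqrt ((A * Aᴴ).trace.re)

/-- `X` is a normalized projector: an orthogonal projector of rank `k ≥ 1`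
divided by `√k`. -/
def IsNormalizedProjector {N : ℕ} (X : Matrix (Fin N) (Fin N) ℂ) : Prop :=
  ∃ P : Matrix (Fin N) (Fin N) ℂ, P.IsHermitian ∧ P * P = P ∧ 1 ≤ P.rank ∧
    X = ((Real.sqrt P.rank)⁻¹ : ℂ) • P

/-!
Diagonalize `X = U diag(a) U*`. Conjugation by the unitary `U` preserves normalized projectors,
so it suffices to decompose `diag(a)`, and writing `a = a⁺ - a⁻` it suffices to treat a
nonnegative vector, which after reordering is `d₀ ≥ d₁ ≥ ⋯ ≥ d_{n-1} ≥ d_n = 0`. The layer-cake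
formula `d = ∑ₖ (dₖ - dₖ₊₁) 𝟙_{[0,k]}` expresses `diag(d)` through the normalized projectors
`diag(𝟙_{[0,k]}) / √(k+1)` with weights `(dₖ - dₖ₊₁) √(k+1) ≥ 0`. Abel summation turns the total
weight into `∑ₖ dₖ (√(k+1) - √k)`, which Cauchy–Schwarz bounds by `‖d‖₂` times
`(∑ₖ (√(k+1) - √k)²)^{1/2}`; since `(√(k+1) - √k)² ≤ 1/(4k)`, the harmonic bound gives
`∑ₖ (√(k+1) - √k)² ≤ 5/4 + (ln n)/4`. The two signs cost a factor `√2`, and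
`√(2 (5/4 + L/4)) ≤ 4 √L` as soon as `L = ln N ≥ ln 2`.
-/

open Finset

lemma sq_sqrt_add_one_sub_sqrt_le {x : ℝ} (hx : 0 < x) : (√(x + 1) - √x) ^ 2 ≤ (4 * x)⁻¹ := by
  have ha : √(x + 1) ^ 2 = x + 1 := Real.sq_sqrt (by linarith)
  have hb : √x ^ 2 = x := Real.sq_sqrt hx.le
  have hconj : (√(x + 1) - √x) * (√(x + 1) + √x) = 1 := by linear_combination ha - hb
  have hsq : 4 * √x ^ 2 ≤ (√(x + 1) + √x) ^ 2 := by
    nlinarith [Real.sqrt_le_sqrt (show x ≤ x + 1 by linarith), Real.sqrt_nonneg x]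
  rw [← one_div, le_div_iff₀ (by positivity)]
  calc (√(x + 1) - √x) ^ 2 * (4 * x) = (√(x + 1) - √x) ^ 2 * (4 * √x ^ 2) := by rw [hb]
    _ ≤ (√(x + 1) - √x) ^ 2 * (√(x + 1) + √x) ^ 2 := by gcongr
    _ = 1 := by rw [← mul_pow, hconj, one_pow]

lemma sum_range_sq_sqrt_succ_sub_sqrt_le (n : ℕ) :
    ∑ k ∈ range n, (√(k + 1) - √k) ^ 2 ≤ 5 / 4 + Real.log n / 4 := by
  rcases n with _ | n
  · simp; positivity
  have hlog : Real.log n ≤ Real.log (n + 1 : ℕ) := by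
    rcases n.eq_zero_or_pos with rfl | hn
    · simp
    · exact Real.log_le_log (by positivity) (by push_cast; linarith)
  have hharm : ∑ k ∈ range n, ((k + 1 : ℕ) : ℝ)⁻¹ ≤ 1 + Real.log n := by
    simpa only [harmonic, Rat.cast_sum, Rat.cast_inv, Rat.cast_natCast]
      using harmonic_le_one_add_log n
  have hterm (k : ℕ) :
      (√((k + 1 : ℕ) + 1) - √(k + 1 : ℕ)) ^ 2 ≤ (4 : ℝ)⁻¹ * ((k + 1 : ℕ) : ℝ)⁻¹ := by
    rw [← mul_inv]; exact sq_sqrt_add_one_sub_sqrt_le (by positivity)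
  rw [sum_range_succ']
  calc ∑ k ∈ range n, (√((k + 1 : ℕ) + 1) - √(k + 1 : ℕ)) ^ 2 + (√((0 : ℕ) + 1) - √(0 : ℕ)) ^ 2
      ≤ ∑ k ∈ range n, (4 : ℝ)⁻¹ * ((k + 1 : ℕ) : ℝ)⁻¹ + 1 := by
        gcongr with k; exacts [hterm k, by simp]
    _ ≤ 5 / 4 + Real.log (n + 1 : ℕ) / 4 := by rw [← mul_sum]; linarith

lemma sqrt_add_sqrt_le_sqrt_two_mul {x y : ℝ} (hx : 0 ≤ x) (hy : 0 ≤ y) :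
    √x + √y ≤ √(2 * (x + y)) := by
  rw [Real.le_sqrt (by positivity) (by positivity)]
  nlinarith [Real.sq_sqrt hx, Real.sq_sqrt hy, sq_nonneg (√x - √y)]

lemma sqrt_two_mul_mul_sqrt_le {S L : ℝ} (hS₀ : 0 ≤ S) (hS₁ : S ≤ 1) (hL : Real.log 2 ≤ L) :
    √(2 * S) * √(5 / 4 + L / 4) ≤ 4 * √L := by
  have hL₀ : 0.6931471803 < L := Real.log_two_gt_d9.trans_le hL
  calc √(2 * S) * √(5 / 4 + L / 4)
      = √((2 * S) * (5 / 4 + L / 4)) := (Real.sqrt_mul (by positivity) _).symm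
    _ ≤ √(4 ^ 2 * L) := Real.sqrt_le_sqrt (by nlinarith)
    _ = 4 * √L := by rw [Real.sqrt_mul (by positivity), Real.sqrt_sq (by norm_num)]

lemma sum_range_sub_succ_mul {R : Type*} [CommRing R] (d g : ℕ → R) (n : ℕ) :
    ∑ k ∈ range n, (d k - d (k + 1)) * g (k + 1) =
      ∑ k ∈ range n, d k * (g (k + 1) - g k) + d 0 * g 0 - d n * g n := by
  induction n with
  | zero => simp
  | succ n ih => rw [sum_range_succ, sum_range_succ, ih]; ring

lemma sum_range_ite_sub_succ {G : Type*} [AddCommGroup G] (d : ℕ → G) {r n : ℕ} (h : r ≤ n) :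
    ∑ k ∈ range n, (if r ≤ k then d k - d (k + 1) else 0) = d r - d n := by
  induction n, h using Nat.le_induction with
  | base => rw [sub_self]; exact sum_eq_zero fun k hk => if_neg (by simpa using hk)
  | succ n hrn ih => rw [sum_range_succ, ih, if_pos hrn]; abel

lemma diagonal_eq_sum_smul_diagonal_Iic {n : ℕ} {d : ℕ → ℝ} (hdn : d n = 0) :
    (diagonal fun i : Fin n => (d i : ℂ)) =
      ∑ k : Fin n, ((d k - d (k + 1) : ℝ) : ℂ) • diagonal fun i => if i ∈ Iic k then 1 else 0 := by
  ext i j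
  rcases eq_or_ne i j with rfl | hij
  · simp only [Matrix.sum_apply, Matrix.smul_apply, diagonal_apply_eq, mem_Iic, Fin.le_def,
      smul_eq_mul, mul_ite, mul_one, mul_zero]
    push_cast
    rw [Fin.sum_univ_eq_sum_range (fun k => if (i : ℕ) ≤ k then (d k : ℂ) - d (k + 1) else 0),
      sum_range_ite_sub_succ _ i.is_lt.le, hdn, Complex.ofReal_zero, sub_zero]
  · simp [Matrix.sum_apply, diagonal_apply_ne _ hij]

lemma isNormalizedProjector_diagonal_indicator {N : ℕ} {S : Finset (Fin N)} (hS : S.Nonempty) :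
    IsNormalizedProjector
      (((√(#S : ℝ))⁻¹ : ℂ) • diagonal fun i => if i ∈ S then (1 : ℂ) else 0) := by
  set P : Matrix (Fin N) (Fin N) ℂ := diagonal fun i => if i ∈ S then 1 else 0
  have hrank : P.rank = #S := by
    rw [rank_diagonal]; simp [Fintype.card_subtype]
  refine ⟨P, ?_, ?_, by rw [hrank]; exact hS.card_pos, by rw [hrank]⟩
  · exact isHermitian_diagonal_of_self_adjoint _ (by ext i; simp [apply_ite star])
  · rw [diagonal_mul_diagonal]; congr; funext i; split_ifs <;> simp

lemma IsNormalizedProjector.submatrix {N : ℕ} {Y : Matrix (Fin N) (Fin N) ℂ}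
    (h : IsNormalizedProjector Y) (e : Fin N ≃ Fin N) :
    IsNormalizedProjector (Y.submatrix e e) := by
  obtain ⟨P, hP, hPP, hrank, rfl⟩ := h
  exact ⟨P.submatrix e e, hP.submatrix e, by rw [submatrix_mul_equiv, hPP],
    by rwa [rank_submatrix], by rw [rank_submatrix]; rfl⟩

lemma IsNormalizedProjector.conj {N : ℕ} {Y : Matrix (Fin N) (Fin N) ℂ}
    (h : IsNormalizedProjector Y) (U : unitary (Matrix (Fin N) (Fin N) ℂ)) :
    IsNormalizedProjector (Unitary.conjStarAlgAut ℂ _ U Y) := by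
  obtain ⟨P, hP, hPP, hrank, rfl⟩ := h
  have hrankU : (Unitary.conjStarAlgAut ℂ _ U P).rank = P.rank := by
    rw [Unitary.conjStarAlgAut_apply, ← Unitary.coe_star,
      rank_mul_eq_left_of_isUnit_det _ _ (UnitaryGroup.det_isUnit _),
      rank_mul_eq_right_of_isUnit_det _ _ (UnitaryGroup.det_isUnit _)]
  refine ⟨_, isHermitian_iff_isSelfAdjoint.2 (hP.isSelfAdjoint.map _),
    by rw [← map_mul (Unitary.conjStarAlgAut ℂ _ U), hPP], by rwa [hrankU],
    by rw [map_smul, hrankU]⟩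

def HasProjectorDecomposition {N : ℕ} (X : Matrix (Fin N) (Fin N) ℂ) (w : ℝ) : Prop :=
  ∃ (m : ℕ) (lam : Fin m → ℝ) (Xx : Fin m → Matrix (Fin N) (Fin N) ℂ),
    (∀ x, IsNormalizedProjector (Xx x)) ∧ X = ∑ x, (lam x : ℂ) • Xx x ∧ ∑ x, |lam x| ≤ w

namespace HasProjectorDecomposition

variable {N : ℕ} {X Y : Matrix (Fin N) (Fin N) ℂ} {w w' : ℝ}

lemma mono (h : HasProjectorDecomposition X w) (hw : w ≤ w') :
    HasProjectorDecomposition X w' := by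
  obtain ⟨m, lam, A, hA, hX, hlam⟩ := h
  exact ⟨m, lam, A, hA, hX, hlam.trans hw⟩

lemma neg (h : HasProjectorDecomposition X w) : HasProjectorDecomposition (-X) w := by
  obtain ⟨m, lam, A, hA, rfl, hlam⟩ := h
  exact ⟨m, -lam, A, hA, by simp, by simpa⟩

lemma add (hX : HasProjectorDecomposition X w) (hY : HasProjectorDecomposition Y w') :
    HasProjectorDecomposition (X + Y) (w + w') := by
  obtain ⟨m, lam, A, hA, rfl, hlam⟩ := hX
  obtain ⟨m', lam', B, hB, rfl, hlam'⟩ := hY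
  refine ⟨m + m', Fin.append lam lam', Fin.append A B,
    Fin.addCases (fun i => by simpa using hA i) (fun i => by simpa using hB i), ?_, ?_⟩
  · simp [Fin.sum_univ_add]
  · simp only [Fin.sum_univ_add, Fin.append_left, Fin.append_right]
    exact add_le_add hlam hlam'

lemma map {F : Type*} [FunLike F (Matrix (Fin N) (Fin N) ℂ) (Matrix (Fin N) (Fin N) ℂ)]
    [LinearMapClass F ℂ (Matrix (Fin N) (Fin N) ℂ) (Matrix (Fin N) (Fin N) ℂ)]
    (h : HasProjectorDecomposition X w) (φ : F)
    (hφ : ∀ Y, IsNormalizedProjector Y → IsNormalizedProjector (φ Y)) :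
    HasProjectorDecomposition (φ X) w := by
  obtain ⟨m, lam, A, hA, rfl, hlam⟩ := h
  exact ⟨m, lam, φ ∘ A, fun x => hφ _ (hA x),
    by simp only [map_sum, map_smul, Function.comp_apply], hlam⟩

end HasProjectorDecomposition

lemma hasProjectorDecomposition_diagonal_of_antitone {n : ℕ} {d : ℕ → ℝ} (hd : Antitone d)
    (hdn : d n = 0) :
    HasProjectorDecomposition (diagonal fun i : Fin n => (d i : ℂ))
      (√(∑ k ∈ range n, d k ^ 2) * √(5 / 4 + Real.log n / 4)) := by
  have hgap (k : ℕ) : 0 ≤ d k - d (k + 1) := sub_nonneg.2 (hd k.le_succ)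
  refine ⟨n, fun k => (d k - d (k + 1)) * √(k + 1),
    fun k => ((√(k + 1 : ℝ))⁻¹ : ℂ) • diagonal fun i => if i ∈ Iic k then 1 else 0, ?_, ?_, ?_⟩
  · intro k
    simpa [Fin.card_Iic] using isNormalizedProjector_diagonal_indicator (S := Iic k) ⟨k, by simp⟩
  · rw [diagonal_eq_sum_smul_diagonal_Iic hdn]
    refine sum_congr rfl fun k _ => ?_
    have : (√(k + 1 : ℝ) : ℂ) ≠ 0 := by norm_cast; positivity
    rw [smul_smul]; congr 1; push_cast; field_simp
  · calc ∑ k : Fin n, |(d k - d (k + 1)) * √(k + 1)|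
        = ∑ k ∈ range n, (d k - d (k + 1)) * √(k + 1) := by
          simp_rw [abs_of_nonneg (mul_nonneg (hgap _) (Real.sqrt_nonneg _))]
          exact Fin.sum_univ_eq_sum_range (fun k => (d k - d (k + 1)) * √(k + 1)) n
      _ = ∑ k ∈ range n, d k * (√(k + 1) - √k) := by
          simpa [hdn] using sum_range_sub_succ_mul d (fun k => √(k : ℝ)) n
      _ ≤ √(∑ k ∈ range n, d k ^ 2) * √(∑ k ∈ range n, (√(k + 1) - √k) ^ 2) :=
          Real.sum_mul_le_sqrt_mul_sqrt _ _ _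
      _ ≤ √(∑ k ∈ range n, d k ^ 2) * √(5 / 4 + Real.log n / 4) := by
          gcongr; exact sum_range_sq_sqrt_succ_sub_sqrt_le n

lemma hasProjectorDecomposition_diagonal_of_nonneg {n : ℕ} {b : Fin n → ℝ} (hb : 0 ≤ b) :
    HasProjectorDecomposition (diagonal fun i => (b i : ℂ))
      (√(∑ i, b i ^ 2) * √(5 / 4 + Real.log n / 4)) := by
  set e : Equiv.Perm (Fin n) := Fin.revPerm.trans (Tuple.sort b)
  have he : Antitone (b ∘ e) := fun k l hkl => Tuple.monotone_sort b (Fin.rev_le_rev.2 hkl)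
  set d : ℕ → ℝ := fun k => if h : k < n then b (e ⟨k, h⟩) else 0
  have hd : Antitone d := by
    intro k l hkl
    simp only [d]
    split_ifs with hl hk hk
    · exact he (show (⟨k, hk⟩ : Fin n) ≤ ⟨l, hl⟩ from hkl)
    · omega
    · exact hb _
    · rfl
  have hde (k : Fin n) : d k = b (e k) := dif_pos k.is_lt
  have hsq : ∑ k ∈ range n, d k ^ 2 = ∑ i, b i ^ 2 := by
    rw [← Fin.sum_univ_eq_sum_range (fun k => d k ^ 2)]
    simp only [hde]
    exact Equiv.sum_comp e (fun i => b i ^ 2)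
  have hdiag : diagonal (fun i => (b i : ℂ)) =
      reindex e e (diagonal fun k : Fin n => (d k : ℂ)) := by
    rw [reindex_apply, submatrix_diagonal_equiv]
    simp [hde]
  rw [hdiag, ← hsq]
  exact (hasProjectorDecomposition_diagonal_of_antitone hd (dif_neg n.lt_irrefl)).map
    (reindexLinearEquiv ℂ ℂ e e) fun Y hY => hY.submatrix _

lemma hasProjectorDecomposition_diagonal {n : ℕ} (a : Fin n → ℝ) :
    HasProjectorDecomposition (diagonal fun i => (a i : ℂ))
      (√(2 * ∑ i, a i ^ 2) * √(5 / 4 + Real.log n / 4)) := by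
  set b : Fin n → ℝ := fun i => max (a i) 0
  set c : Fin n → ℝ := fun i => max (-a i) 0
  have hsplit : diagonal (fun i => (a i : ℂ)) =
      diagonal (fun i => (b i : ℂ)) + -diagonal (fun i => (c i : ℂ)) := by
    rw [← sub_eq_add_neg, diagonal_sub]
    congr; funext i
    rcases le_total (a i) 0 with h | h <;> simp [b, c, h]
  have hsq : ∑ i, b i ^ 2 + ∑ i, c i ^ 2 = ∑ i, a i ^ 2 := by
    rw [← sum_add_distrib]
    congr; funext i
    rcases le_total (a i) 0 with h | h <;> simp [b, c, h]
  rw [hsplit, ← hsq]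
  refine ((hasProjectorDecomposition_diagonal_of_nonneg fun i => le_max_right _ _).add
    (hasProjectorDecomposition_diagonal_of_nonneg fun i => le_max_right _ _).neg).mono ?_
  rw [← add_mul]
  gcongr
  exact sqrt_add_sqrt_le_sqrt_two_mul (by positivity) (by positivity)

lemma Matrix.IsHermitian.trace_mul_conjTranspose_self {𝕜 n : Type*} [RCLike 𝕜] [Fintype n]
    [DecidableEq n] {A : Matrix n n 𝕜} (hA : A.IsHermitian) :
    (A * Aᴴ).trace = ∑ i, (hA.eigenvalues i : 𝕜) ^ 2 := by
  set D : Matrix n n 𝕜 := diagonal (RCLike.ofReal ∘ hA.eigenvalues)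
  calc (A * Aᴴ).trace = (Unitary.conjStarAlgAut 𝕜 _ hA.eigenvectorUnitary (D * D)).trace := by
        rw [map_mul, ← hA.spectral_theorem, hA.eq]
    _ = (D * D).trace := by
        rw [Unitary.conjStarAlgAut_apply, trace_mul_cycle, Unitary.coe_star_mul_self, one_mul]
    _ = ∑ i, (hA.eigenvalues i : 𝕜) ^ 2 := by simp [D, diagonal_mul_diagonal, sq]

/-- Any Hermitian `N × N` matrix (`N > 1`) with Frobenius norm at most 1
is a linear combination of normalized projectors with total weight at most `4 √(ln N)`. -/
theorem hermitian_decomposition_into_normalized_projectors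
    (N : ℕ) (hN : 1 < N) (X : Matrix (Fin N) (Fin N) ℂ)
    (hX : X.IsHermitian) (hfrob : frobNorm X ≤ 1) :
    ∃ (m : ℕ) (lam : Fin m → ℝ) (Xx : Fin m → Matrix (Fin N) (Fin N) ℂ),
      (∀ x, IsNormalizedProjector (Xx x)) ∧
      X = ∑ x, ((lam x : ℂ)) • Xx x ∧
      ∑ x, |lam x| ≤ 4 * Real.sqrt (Real.log N) := by
  set a := hX.eigenvalues
  have hsum : ∑ i, a i ^ 2 ≤ 1 := by
    rw [frobNorm, hX.trace_mul_conjTranspose_self] at hfrob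
    norm_cast at hfrob
    rwa [Real.sqrt_le_one] at hfrob
  have hspec : Unitary.conjStarAlgAut ℂ _ hX.eigenvectorUnitary (diagonal fun i => (a i : ℂ)) = X :=
    hX.spectral_theorem.symm
  have hdecomp := (hasProjectorDecomposition_diagonal a).map
    (Unitary.conjStarAlgAut ℂ _ hX.eigenvectorUnitary) fun Y hY => hY.conj _
  rw [hspec] at hdecomp
  exact hdecomp.mono (sqrt_two_mul_mul_sqrt_le (by positivity) hsum
    (Real.log_le_log two_pos (by exact_mod_cast hN)))
end

section
/- Let g = (g_{ijk}) ∈ ℝ^{N³} be any fixed vector (not necessarily random) satisfying (i) ‖g‖₂² ≥ (1−δ)N³ and (ii) Σ_{j,k} g_{ijk}² ≤ (1+δ)N² for every i, and symmetrically for the j and k indices. Define T as the matrix |g⟩⟨g| with all entries having i=i', j=j' or k=k' set to zero. Then for sufficiently large N, ⟨g|T|g⟩ ≥ (1−3δ)·N³·‖g‖₂², and hence ‖T‖ ≥ (1−3δ)(1−δ)^{-1} N³ ≥ (1−6δ)N³ for small enough δ. -/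
/-! Write `w = g²` and `S = ∑ w`. The quadratic form `⟨g|T|g⟩` is the sum of `w p * w q` over
pairs `p, q` differing in all three coordinates. Inclusion–exclusion bounds it below by `S²` minus,
for each coordinate, the sum of `w p * w q` over pairs agreeing in that coordinate; the latter is
the sum of the squared slice masses, hence at most `(1 + δ) N² S`. So
`⟨g|T|g⟩ ≥ S (S - 3 (1 + δ) N²)`, and `3 N² ≤ δ N³` once `N ≥ 3 / δ`. Since `⟨g|T|g⟩ ≤ ‖T‖ S`,
the same margin bounds `‖T‖`. -/

open Matrix

/-- The operator (largest-singular-value) norm of a real matrix. -/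
noncomputable def opNorm {m : Type*} [Fintype m] [DecidableEq m] (A : Matrix m m ℝ) : ℝ :=
  ‖Matrix.toEuclideanCLM (𝕜 := ℝ) A‖

/-- The matrix `T` built from the coefficients `g`: the rank-one matrix `|g⟩⟨g|` with all
entries having `i = i'`, `j = j'` or `k = k'` zeroed out. -/
def gameTensor {N : ℕ} (g : Fin N × Fin N × Fin N → ℝ) :
    Matrix (Fin N × Fin N × Fin N) (Fin N × Fin N × Fin N) ℝ :=
  fun p q =>
    if p.1 ≠ q.1 ∧ p.2.1 ≠ q.2.1 ∧ p.2.2 ≠ q.2.2 then g p * g q else 0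

open Finset

section Fiberwise

variable {ι κ : Type*} [Fintype ι] [Fintype κ] [DecidableEq κ]

theorem sum_sum_ite_eq_eq_sum_sq_fiberwise {R : Type*} [CommSemiring R] (π : ι → κ)
    (w : ι → R) :
    ∑ p, ∑ q, (if π p = π q then w p * w q else 0) = ∑ a, (∑ p with π p = a, w p) ^ 2 := by
  calc ∑ p, ∑ q, (if π p = π q then w p * w q else 0)
      = ∑ p, w p * ∑ q with π q = π p, w q := by
        simp only [sum_filter, mul_sum, mul_ite, mul_zero, eq_comm]
    _ = ∑ a, ∑ p with π p = a, w p * ∑ q with π q = π p, w q := (sum_fiberwise _ π _).symm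
    _ = ∑ a, (∑ p with π p = a, w p) ^ 2 := by
        refine sum_congr rfl fun a _ => ?_
        rw [sq, sum_mul]
        refine sum_congr rfl fun p hp => ?_
        rw [(mem_filter.1 hp).2]

theorem sum_sum_ite_eq_le_mul_sum {R : Type*} [CommSemiring R] [PartialOrder R] [IsOrderedRing R]
    (π : ι → κ) {w : ι → R} (hw : ∀ p, 0 ≤ w p) {M : R} (hM : ∀ a, ∑ p with π p = a, w p ≤ M) :
    ∑ p, ∑ q, (if π p = π q then w p * w q else 0) ≤ M * ∑ p, w p := by
  rw [sum_sum_ite_eq_eq_sum_sq_fiberwise, ← sum_fiberwise univ π w, mul_sum]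
  refine sum_le_sum fun a _ => ?_
  rw [sq]
  exact mul_le_mul_of_nonneg_right (hM a) (sum_nonneg fun p _ => hw p)

end Fiberwise

theorem sq_sum_sub_le_sum_sum_ite_ne {ι κ₁ κ₂ κ₃ R : Type*} [Fintype ι] [DecidableEq κ₁]
    [DecidableEq κ₂] [DecidableEq κ₃] [CommRing R] [LinearOrder R] [IsStrictOrderedRing R]
    (π₁ : ι → κ₁) (π₂ : ι → κ₂) (π₃ : ι → κ₃) {w : ι → R} (hw : ∀ p, 0 ≤ w p) :
    (∑ p, w p) ^ 2 - ∑ p, ∑ q, (if π₁ p = π₁ q then w p * w q else 0)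
        - ∑ p, ∑ q, (if π₂ p = π₂ q then w p * w q else 0)
        - ∑ p, ∑ q, (if π₃ p = π₃ q then w p * w q else 0) ≤
      ∑ p, ∑ q, (if π₁ p ≠ π₁ q ∧ π₂ p ≠ π₂ q ∧ π₃ p ≠ π₃ q then w p * w q else 0) := by
  simp only [sq, sum_mul_sum, ← sum_sub_distrib]
  refine sum_le_sum fun p _ => sum_le_sum fun q _ => ?_
  have := mul_nonneg (hw p) (hw q)
  split_ifs <;> simp_all

section TripleProduct

variable {α β γ M : Type*} [Fintype α] [Fintype β] [Fintype γ] [AddCommMonoid M]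

theorem sum_filter_fst_eq [DecidableEq α] (f : α × β × γ → M) (i : α) :
    ∑ p with p.1 = i, f p = ∑ j, ∑ k, f (i, j, k) := by
  rw [show univ.filter (·.1 = i) = {i} ×ˢ univ by
      ext; simp only [mem_filter, mem_product, mem_singleton, mem_univ, true_and, and_true],
    sum_product, sum_singleton, Fintype.sum_prod_type]

theorem sum_filter_snd_fst_eq [DecidableEq β] (f : α × β × γ → M) (j : β) :
    ∑ p with p.2.1 = j, f p = ∑ i, ∑ k, f (i, j, k) := by
  rw [show univ.filter (·.2.1 = j) = univ ×ˢ ({j} ×ˢ univ) by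
      ext; simp only [mem_filter, mem_product, mem_singleton, mem_univ, true_and, and_true],
    sum_product]
  simp_rw [sum_product, sum_singleton]

theorem sum_filter_snd_snd_eq [DecidableEq γ] (f : α × β × γ → M) (k : γ) :
    ∑ p with p.2.2 = k, f p = ∑ i, ∑ j, f (i, j, k) := by
  rw [show univ.filter (·.2.2 = k) = univ ×ˢ (univ ×ˢ {k}) by
      ext; simp only [mem_filter, mem_product, mem_singleton, mem_univ, true_and],
    sum_product]
  simp_rw [sum_product, sum_singleton]

end TripleProduct

theorem sum_mul_apply_mul_le_opNorm_mul_sum_sq {ι : Type*} [Fintype ι] [DecidableEq ι]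
    (A : Matrix ι ι ℝ) (g : ι → ℝ) :
    ∑ p, ∑ q, g p * A p q * g q ≤ opNorm A * ∑ p, g p ^ 2 := by
  set v : EuclideanSpace ℝ ι := WithLp.toLp 2 g
  have hinner :
      inner ℝ v (Matrix.toEuclideanCLM (𝕜 := ℝ) A v) = ∑ p, ∑ q, g p * A p q * g q := by
    simp [v, Matrix.toEuclideanCLM_toLp, EuclideanSpace.inner_toLp_toLp, dotProduct, mulVec,
      mul_sum, mul_comm, mul_left_comm]
  have hnorm : ‖v‖ ^ 2 = ∑ p, g p ^ 2 := EuclideanSpace.real_norm_sq_eq v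
  calc ∑ p, ∑ q, g p * A p q * g q
        = inner ℝ v (Matrix.toEuclideanCLM (𝕜 := ℝ) A v) := hinner.symm
    _ ≤ ‖v‖ * ‖Matrix.toEuclideanCLM (𝕜 := ℝ) A v‖ := real_inner_le_norm _ _
    _ ≤ ‖v‖ * (opNorm A * ‖v‖) := by gcongr; exact ContinuousLinearMap.le_opNorm _ v
    _ = opNorm A * ∑ p, g p ^ 2 := by rw [← hnorm]; ring

theorem sum_mul_gameTensor_mul_eq {N : ℕ} (g : Fin N × Fin N × Fin N → ℝ) :
    ∑ p, ∑ q, g p * gameTensor g p q * g q =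
      ∑ p, ∑ q, (if p.1 ≠ q.1 ∧ p.2.1 ≠ q.2.1 ∧ p.2.2 ≠ q.2.2 then g p ^ 2 * g q ^ 2 else 0) := by
  refine sum_congr rfl fun p _ => sum_congr rfl fun q _ => ?_
  unfold gameTensor
  split_ifs <;> ring

theorem sum_sq_mul_sub_le_sum_mul_gameTensor_mul {N : ℕ} (g : Fin N × Fin N × Fin N → ℝ)
    {M : ℝ}
    (h₁ : ∀ i, ∑ j, ∑ k, g (i, j, k) ^ 2 ≤ M) (h₂ : ∀ j, ∑ i, ∑ k, g (i, j, k) ^ 2 ≤ M)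
    (h₃ : ∀ k, ∑ i, ∑ j, g (i, j, k) ^ 2 ≤ M) :
    (∑ p, g p ^ 2) * (∑ p, g p ^ 2 - 3 * M) ≤ ∑ p, ∑ q, g p * gameTensor g p q * g q := by
  have hw : ∀ p, 0 ≤ g p ^ 2 := fun p => sq_nonneg (g p)
  have e₁ := sum_sum_ite_eq_le_mul_sum (fun p => p.1) hw fun i =>
    (sum_filter_fst_eq _ i).trans_le (h₁ i)
  have e₂ := sum_sum_ite_eq_le_mul_sum (fun p => p.2.1) hw fun j =>
    (sum_filter_snd_fst_eq _ j).trans_le (h₂ j)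
  have e₃ := sum_sum_ite_eq_le_mul_sum (fun p => p.2.2) hw fun k =>
    (sum_filter_snd_snd_eq _ k).trans_le (h₃ k)
  have hincl := sq_sum_sub_le_sum_sum_ite_ne (fun p => p.1) (fun p => p.2.1) (fun p => p.2.2) hw
  rw [sum_mul_gameTensor_mul_eq]
  linarith

/-- For small enough `δ` and sufficiently large `N`, any vector
`g ∈ ℝ^{N³}` with `‖g‖₂² ≥ (1−δ)N³` and all index slices satisfying
`∑ g² ≤ (1+δ)N²` gives `⟨g|T|g⟩ ≥ (1−3δ) N³ ‖g‖₂²`, hence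
`‖T‖ ≥ (1−3δ)(1−δ)⁻¹ N³ ≥ (1−6δ) N³`. -/
theorem deterministic_operator_norm_lower_bound :
    ∃ δ₀ : ℝ, 0 < δ₀ ∧ ∀ δ : ℝ, 0 < δ → δ ≤ δ₀ → ∃ N₀ : ℕ, ∀ N : ℕ, N₀ ≤ N →
      ∀ g : Fin N × Fin N × Fin N → ℝ,
        ((1 - δ) * (N : ℝ) ^ 3 ≤ ∑ p, (g p) ^ 2) →
        (∀ i : Fin N, ∑ j, ∑ k, (g (i, j, k)) ^ 2 ≤ (1 + δ) * (N : ℝ) ^ 2) →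
        (∀ j : Fin N, ∑ i, ∑ k, (g (i, j, k)) ^ 2 ≤ (1 + δ) * (N : ℝ) ^ 2) →
        (∀ k : Fin N, ∑ i, ∑ j, (g (i, j, k)) ^ 2 ≤ (1 + δ) * (N : ℝ) ^ 2) →
        ((1 - 3 * δ) * (N : ℝ) ^ 3 * (∑ p, (g p) ^ 2) ≤
            ∑ p, ∑ q, g p * gameTensor g p q * g q) ∧
        (1 - 3 * δ) * (1 - δ)⁻¹ * (N : ℝ) ^ 3 ≤ opNorm (gameTensor g) ∧
        (1 - 6 * δ) * (N : ℝ) ^ 3 ≤ opNorm (gameTensor g) := by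
  refine ⟨1 / 2, by norm_num, fun δ hδ hδ₀ => ⟨⌈3 / δ⌉₊, fun N hN g hS h₁ h₂ h₃ => ?_⟩⟩
  have hQ := sum_sq_mul_sub_le_sum_mul_gameTensor_mul g h₁ h₂ h₃
  set S := ∑ p, g p ^ 2
  have hδN : 3 ≤ δ * N := by
    rw [← div_le_iff₀' hδ]
    exact (Nat.le_ceil _).trans (by exact_mod_cast hN)
  have hNpos : (0 : ℝ) < N := by nlinarith
  have hN3 : (0 : ℝ) < (N : ℝ) ^ 3 := by positivity
  have hS₀ : 0 < S := lt_of_lt_of_le (mul_pos (by linarith) hN3) hS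
  have hmargin : (1 - 2 * δ - δ ^ 2) * (N : ℝ) ^ 3 ≤ S - 3 * ((1 + δ) * (N : ℝ) ^ 2) := by
    nlinarith [mul_le_mul_of_nonneg_right hδN (sq_nonneg (N : ℝ))]
  have hnorm : S - 3 * ((1 + δ) * (N : ℝ) ^ 2) ≤ opNorm (gameTensor g) := by
    have hop := sum_mul_apply_mul_le_opNorm_mul_sum_sq (gameTensor g) g
    exact le_of_mul_le_mul_left (hQ.trans (hop.trans_eq (mul_comm _ _))) hS₀
  refine ⟨?_, ?_, ?_⟩
  · calc (1 - 3 * δ) * (N : ℝ) ^ 3 * S ≤ S * ((1 - 2 * δ - δ ^ 2) * (N : ℝ) ^ 3) := by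
          nlinarith [mul_pos (mul_pos hδ hN3) hS₀]
      _ ≤ S * (S - 3 * ((1 + δ) * (N : ℝ) ^ 2)) := mul_le_mul_of_nonneg_left hmargin hS₀.le
      _ ≤ _ := hQ
  · refine le_trans ?_ (hmargin.trans hnorm)
    rw [mul_comm _ ((1 - δ)⁻¹), mul_assoc, inv_mul_le_iff₀ (by linarith)]
    nlinarith [mul_pos (mul_pos hδ hδ) hN3]
  · nlinarith
end

section
/- For any 3-player XOR game G with at most Q possible questions to the third player, the entangled bias satisfies β*(G) ≤ √Q · K_G^ℝ · β(G), where K_G^ℝ is the real Grothendieck constant. -/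
/-!
Write the correlation `⟨ψ| A_i ⊗ B_j ⊗ C_k |ψ⟩` as `⟨x_i, U_j w_k⟩` with the unit vectors
`x_i = (A_i ⊗ 1 ⊗ 1) ψ`, `w_k = (1 ⊗ 1 ⊗ C_k) ψ` and the unitaries `U_j = 1 ⊗ B_j ⊗ 1`.
Averaging over uniformly random signs `ε ∈ {±1}^Q` and putting `Φ_ε = ∑_k ε_k w_k`, the bias is
`𝔼_ε ∑_{i,j} (∑_k ε_k T_ijk) Re ⟨x_i, U_j Φ_ε⟩`. For fixed `ε` the two-player game
`∑_k ε_k T_ijk` has classical bias at most `β`, so Grothendieck's inequality bounds the inner sum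
by `K β ‖Φ_ε‖`, and `𝔼_ε ‖Φ_ε‖ ≤ (𝔼_ε ‖Φ_ε‖²)^{1/2} = √Q`.
-/

open Matrix

/-- A `±1`-valued (classical) strategy. -/
def IsSign {Q : ℕ} (χ : Fin Q → ℝ) : Prop := ∀ i, χ i = 1 ∨ χ i = -1

/-- A `±1`-valued observable: a Hermitian matrix squaring to the identity. -/
def IsObservable {d : ℕ} (A : Matrix (Fin d) (Fin d) ℂ) : Prop :=
  A.IsHermitian ∧ A * A = 1

open scoped InnerProductSpace Kronecker

def IsBilinearBiasBound {Q : ℕ} (M : Fin Q → Fin Q → ℝ) (c : ℝ) : Prop :=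
  ∀ χ υ : Fin Q → ℝ, IsSign χ → IsSign υ → |∑ i, ∑ j, M i j * χ i * υ j| ≤ c

def IsTrilinearBiasBound {Q : ℕ} (T : Fin Q → Fin Q → Fin Q → ℝ) (β : ℝ) : Prop :=
  ∀ χ υ ζ : Fin Q → ℝ, IsSign χ → IsSign υ → IsSign ζ →
    ∑ i, ∑ j, ∑ k, T i j k * χ i * υ j * ζ k ≤ β

def IsGrothendieckConstant (Q : ℕ) (K : ℝ) : Prop :=
  ∀ (d : ℕ) (M : Fin Q → Fin Q → ℝ) (x y : Fin Q → Fin d → ℂ),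
    (∀ i, (∑ l, Complex.normSq (x i l)) = 1) → (∀ j, (∑ l, Complex.normSq (y j l)) = 1) →
    ∀ c : ℝ, IsBilinearBiasBound M c →
      ‖∑ i, ∑ j, (M i j : ℂ) * ∑ l, (starRingEnd ℂ) (x i l) * y j l‖ ≤ K * c

def boolSign (b : Bool) : ℝ := if b then 1 else -1

lemma boolSign_not (b : Bool) : boolSign (!b) = -boolSign b := by
  cases b <;> simp [boolSign]

lemma boolSign_mul_self (b : Bool) : boolSign b * boolSign b = 1 := by
  cases b <;> norm_num [boolSign]

lemma sum_boolSign_mul_boolSign {ι : Type*} [Fintype ι] [DecidableEq ι] (k k' : ι) :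
    ∑ ε : ι → Bool, boolSign (ε k) * boolSign (ε k') =
      if k = k' then (2 : ℝ) ^ Fintype.card ι else 0 := by
  split_ifs with h
  · subst h
    simp [boolSign_mul_self]
  · let flip : Equiv.Perm (ι → Bool) :=
      Equiv.piCongrRight fun i => if i = k then Equiv.boolNot else Equiv.refl Bool
    have hflip : ∀ ε, boolSign (flip ε k) * boolSign (flip ε k') =
        -(boolSign (ε k) * boolSign (ε k')) := fun ε => by
      have hk : flip ε k = !ε k := by simp [flip]
      have hk' : flip ε k' = ε k' := by simp [flip, Ne.symm h]
      rw [hk, hk', boolSign_not, neg_mul]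
    have := Equiv.sum_comp flip fun ε : ι → Bool => boolSign (ε k) * boolSign (ε k')
    simp only [hflip, Finset.sum_neg_distrib] at this
    linarith

lemma sum_map_sum_boolSign_smul {ι M N P : Type*} [Fintype ι] [DecidableEq ι]
    [AddCommGroup M] [Module ℝ M] [AddCommGroup N] [Module ℝ N] [AddCommGroup P] [Module ℝ P]
    (f : M →ₗ[ℝ] N →ₗ[ℝ] P) (a : ι → M) (b : ι → N) :
    ∑ ε : ι → Bool, f (∑ k, boolSign (ε k) • a k) (∑ k, boolSign (ε k) • b k) =
      (2 : ℝ) ^ Fintype.card ι • ∑ k, f (a k) (b k) := by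
  simp only [map_sum, LinearMap.sum_apply, map_smul, LinearMap.smul_apply]
  simp_rw [Finset.smul_sum, smul_smul]
  rw [Finset.sum_comm]
  simp_rw [Finset.sum_comm (γ := ι → Bool), ← Finset.sum_smul, sum_boolSign_mul_boolSign,
    ite_smul, zero_smul, Finset.sum_ite_eq, Finset.mem_univ, if_true]

lemma sum_norm_sum_boolSign_smul_le {ι F : Type*} [Fintype ι] [DecidableEq ι]
    [NormedAddCommGroup F] [InnerProductSpace ℝ F] (w : ι → F) :
    ∑ ε : ι → Bool, ‖∑ k, boolSign (ε k) • w k‖ ≤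
      2 ^ Fintype.card ι * √(∑ k, ‖w k‖ ^ 2) := by
  have hsq : ∑ ε : ι → Bool, ‖∑ k, boolSign (ε k) • w k‖ ^ 2 =
      2 ^ Fintype.card ι * ∑ k, ‖w k‖ ^ 2 := by
    have h := sum_map_sum_boolSign_smul (innerₗ F) w w
    simp only [innerₗ_apply_apply, real_inner_self_eq_norm_sq, smul_eq_mul] at h
    exact h
  have hcs := sq_sum_le_card_mul_sum_sq (s := Finset.univ)
    (f := fun ε : ι → Bool => ‖∑ k, boolSign (ε k) • w k‖)
  simp only [Finset.card_univ, Fintype.card_fun, Fintype.card_bool, Nat.cast_pow,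
    Nat.cast_ofNat, hsq, ← mul_assoc] at hcs
  calc _ ≤ √(2 ^ Fintype.card ι * 2 ^ Fintype.card ι * ∑ k, ‖w k‖ ^ 2) :=
        Real.le_sqrt_of_sq_le hcs
    _ = _ := by rw [Real.sqrt_mul (by positivity), Real.sqrt_mul_self (by positivity)]

section

variable {Q : ℕ}

lemma IsSign.neg {χ : Fin Q → ℝ} (hχ : IsSign χ) : IsSign (-χ) := fun i => by
  rcases hχ i with h | h <;> simp [h]

lemma isSign_boolSign (ε : Fin Q → Bool) : IsSign (fun k => boolSign (ε k)) := fun k => by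
  beta_reduce; cases ε k <;> simp [boolSign]

lemma IsBilinearBiasBound.nonneg {M : Fin Q → Fin Q → ℝ} {c : ℝ}
    (hM : IsBilinearBiasBound M c) : 0 ≤ c :=
  (abs_nonneg _).trans (hM 1 1 (fun _ => Or.inl rfl) (fun _ => Or.inl rfl))

lemma IsTrilinearBiasBound.isBilinearBiasBound_slice {T : Fin Q → Fin Q → Fin Q → ℝ} {β : ℝ}
    (hβ : IsTrilinearBiasBound T β) {ζ : Fin Q → ℝ} (hζ : IsSign ζ) :
    IsBilinearBiasBound (fun i j => ∑ k, ζ k * T i j k) β := by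
  intro χ υ hχ hυ
  have hsum : ∀ χ : Fin Q → ℝ, ∑ i, ∑ j, (∑ k, ζ k * T i j k) * χ i * υ j =
      ∑ i, ∑ j, ∑ k, T i j k * χ i * υ j * ζ k := fun χ => by
    simp only [Finset.sum_mul]
    exact Finset.sum_congr rfl fun i _ => Finset.sum_congr rfl fun j _ =>
      Finset.sum_congr rfl fun k _ => by ring
  have hneg := hβ (-χ) υ ζ hχ.neg hυ hζ
  simp only [Pi.neg_apply, mul_neg, neg_mul, Finset.sum_neg_distrib] at hneg
  rw [hsum, abs_le]
  exact ⟨by linarith, hβ χ υ ζ hχ hυ hζ⟩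

lemma IsTrilinearBiasBound.nonneg {T : Fin Q → Fin Q → Fin Q → ℝ} {β : ℝ}
    (hβ : IsTrilinearBiasBound T β) : 0 ≤ β :=
  (hβ.isBilinearBiasBound_slice (ζ := 1) fun _ => Or.inl rfl).nonneg

lemma IsGrothendieckConstant.nonneg {K : ℝ} (hK : IsGrothendieckConstant Q K) : 0 ≤ K := by
  simpa using hK 1 0 (fun _ _ => 1) (fun _ _ => 1) (by simp) (by simp) 1 fun _ _ _ _ => by simp

variable {E : Type*} [NormedAddCommGroup E] [InnerProductSpace ℂ E] {K : ℝ}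

lemma IsGrothendieckConstant.norm_sum_inner_le [FiniteDimensional ℂ E]
    (hK : IsGrothendieckConstant Q K) {M : Fin Q → Fin Q → ℝ} {c : ℝ}
    (hM : IsBilinearBiasBound M c) (x y : Fin Q → E) (hx : ∀ i, ‖x i‖ = 1)
    (hy : ∀ j, ‖y j‖ = 1) :
    ‖∑ i, ∑ j, (M i j : ℂ) * ⟪x i, y j⟫_ℂ‖ ≤ K * c := by
  let b := stdOrthonormalBasis ℂ E
  have hinner : ∀ u v : E, ⟪u, v⟫_ℂ = ∑ l, (starRingEnd ℂ) (b.repr u l) * b.repr v l := by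
    intro u v
    rw [← b.repr.inner_map_map, PiLp.inner_apply]
    simp [mul_comm]
  have hnorm : ∀ u : E, ‖u‖ = 1 → ∑ l, Complex.normSq (b.repr u l) = 1 := by
    intro u hu
    simp_rw [Complex.normSq_eq_norm_sq, ← EuclideanSpace.norm_sq_eq, b.repr.norm_map, hu,
      one_pow]
  simp_rw [hinner]
  exact hK _ M (fun i => b.repr (x i)) (fun j => b.repr (y j))
    (fun i => hnorm _ (hx i)) (fun j => hnorm _ (hy j)) c hM

lemma IsGrothendieckConstant.sum_re_inner_le [FiniteDimensional ℂ E]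
    (hK : IsGrothendieckConstant Q K) {M : Fin Q → Fin Q → ℝ} {c : ℝ}
    (hM : IsBilinearBiasBound M c) (x y : Fin Q → E) {ρ : ℝ} (hρ : 0 ≤ ρ)
    (hx : ∀ i, ‖x i‖ = 1) (hy : ∀ j, ‖y j‖ = ρ) :
    ∑ i, ∑ j, M i j * (⟪x i, y j⟫_ℂ).re ≤ K * c * ρ := by
  rcases hρ.eq_or_lt with rfl | hρ
  · simp [norm_eq_zero.mp (hy _)]
  have hunit : ∀ j, ‖(ρ⁻¹ : ℂ) • y j‖ = 1 := fun j => by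
    rw [norm_smul, hy, norm_inv, Complex.norm_real, Real.norm_of_nonneg hρ.le,
      inv_mul_cancel₀ hρ.ne']
  calc ∑ i, ∑ j, M i j * (⟪x i, y j⟫_ℂ).re
      = ρ * (∑ i, ∑ j, (M i j : ℂ) * ⟪x i, (ρ⁻¹ : ℂ) • y j⟫_ℂ).re := by
        simp only [inner_smul_right, Complex.re_sum, Finset.mul_sum]
        refine Finset.sum_congr rfl fun i _ => Finset.sum_congr rfl fun j _ => ?_
        rw [mul_left_comm, ← Complex.ofReal_inv, ← mul_assoc, ← Complex.ofReal_mul,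
          Complex.re_ofReal_mul]
        field_simp
    _ ≤ ρ * (K * c) := mul_le_mul_of_nonneg_left
        ((Complex.re_le_norm _).trans (hK.norm_sum_inner_le hM x _ hx hunit)) hρ.le
    _ = K * c * ρ := mul_comm _ _

lemma re_inner_map_sum_boolSign_smul (x : E) (U : E →ₗᵢ[ℂ] E) (w : Fin Q → E)
    (ε : Fin Q → Bool) :
    (⟪x, U (∑ k, boolSign (ε k) • w k)⟫_ℂ).re =
      ∑ k, boolSign (ε k) * (⟪x, U (w k)⟫_ℂ).re := by
  simp only [RCLike.real_smul_eq_coe_smul (K := ℂ), map_sum, map_smul, inner_sum,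
    inner_smul_right, Complex.re_sum]
  exact Finset.sum_congr rfl fun k _ => Complex.re_ofReal_mul _ _

theorem IsGrothendieckConstant.sum_re_inner_isometry_le [FiniteDimensional ℂ E]
    (hK : IsGrothendieckConstant Q K) {T : Fin Q → Fin Q → Fin Q → ℝ} {β : ℝ}
    (hβ : IsTrilinearBiasBound T β) (x w : Fin Q → E) (U : Fin Q → E →ₗᵢ[ℂ] E)
    (hx : ∀ i, ‖x i‖ = 1) (hw : ∀ k, ‖w k‖ = 1) :
    ∑ i, ∑ j, ∑ k, T i j k * (⟪x i, U j (w k)⟫_ℂ).re ≤ √Q * K * β := by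
  set Φ : (Fin Q → Bool) → E := fun ε => ∑ k, boolSign (ε k) • w k
  set F : (Fin Q → Bool) → ℝ := fun ε =>
    ∑ i, ∑ j, (∑ k, boolSign (ε k) * T i j k) * (⟪x i, U j (Φ ε)⟫_ℂ).re
  have hexpand : 2 ^ Q * ∑ i, ∑ j, ∑ k, T i j k * (⟪x i, U j (w k)⟫_ℂ).re = ∑ ε, F ε := by
    simp only [F, Φ, re_inner_map_sum_boolSign_smul]
    rw [Finset.mul_sum]; conv_rhs => rw [Finset.sum_comm]
    refine Finset.sum_congr rfl fun i _ => ?_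
    rw [Finset.mul_sum]; conv_rhs => rw [Finset.sum_comm]
    refine Finset.sum_congr rfl fun j _ => ?_
    have h := sum_map_sum_boolSign_smul (LinearMap.mul ℝ ℝ) (T i j)
      fun k => (⟪x i, U j (w k)⟫_ℂ).re
    simp only [LinearMap.mul_apply', smul_eq_mul, Fintype.card_fin] at h
    exact h.symm
  have hbound : ∀ ε, F ε ≤ K * β * ‖Φ ε‖ := fun ε =>
    hK.sum_re_inner_le (hβ.isBilinearBiasBound_slice (isSign_boolSign ε)) x _
      (norm_nonneg _) hx fun j => (U j).norm_map _
  have havg : ∑ ε, ‖Φ ε‖ ≤ 2 ^ Q * √Q := by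
    let := InnerProductSpace.complexToReal (G := E)
    simpa [hw] using sum_norm_sum_boolSign_smul_le w
  refine le_of_mul_le_mul_left ?_ (by positivity : (0 : ℝ) < 2 ^ Q)
  calc _ = ∑ ε, F ε := hexpand
    _ ≤ ∑ ε, K * β * ‖Φ ε‖ := Finset.sum_le_sum fun ε _ => hbound ε
    _ ≤ K * β * (2 ^ Q * √Q) := by
        rw [← Finset.mul_sum]
        exact mul_le_mul_of_nonneg_left havg (mul_nonneg hK.nonneg hβ.nonneg)
    _ = _ := by ring

end

lemma IsObservable.mem_unitary {d : ℕ} {A : Matrix (Fin d) (Fin d) ℂ} (hA : IsObservable A) :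
    A ∈ unitary (Matrix (Fin d) (Fin d) ℂ) := by
  rw [Unitary.mem_iff, star_eq_conjTranspose, hA.1.eq]
  exact ⟨hA.2, hA.2⟩

lemma EuclideanSpace.norm_toLp_eq_one {n : Type*} [Fintype n] {ψ : n → ℂ}
    (hψ : ∑ p, Complex.normSq (ψ p) = 1) : ‖(WithLp.toLp 2 ψ : EuclideanSpace ℂ n)‖ = 1 := by
  simp only [Complex.normSq_eq_norm_sq] at hψ
  rw [EuclideanSpace.norm_eq]
  simp [hψ]

lemma sum_star_mul_kronecker_mul_eq_inner {l m n : Type*} [Fintype l] [Fintype m] [Fintype n]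
    [DecidableEq l] [DecidableEq m] [DecidableEq n] {A : Matrix l l ℂ} (hA : A.IsHermitian)
    (B : Matrix m m ℂ) (C : Matrix n n ℂ) (ψ : l × m × n → ℂ) :
    ∑ p, ∑ q, (starRingEnd ℂ) (ψ p) * (A p.1 q.1 * B p.2.1 q.2.1 * C p.2.2 q.2.2) * ψ q =
      ⟪toEuclideanCLM (𝕜 := ℂ) (A ⊗ₖ 1) (WithLp.toLp 2 ψ),
        toEuclideanCLM (𝕜 := ℂ) (1 ⊗ₖ (B ⊗ₖ 1))
          (toEuclideanCLM (𝕜 := ℂ) (1 ⊗ₖ (1 ⊗ₖ C)) (WithLp.toLp 2 ψ))⟫_ℂ := by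
  have hsa : IsSelfAdjoint (toEuclideanCLM (𝕜 := ℂ) (A ⊗ₖ (1 : Matrix (m × n) (m × n) ℂ))) := by
    refine IsSelfAdjoint.map ?_ _
    rw [isSelfAdjoint_iff, star_eq_conjTranspose, conjTranspose_kronecker, hA.eq,
      conjTranspose_one]
  have hmul : A ⊗ₖ (1 : Matrix (m × n) (m × n) ℂ) * (1 ⊗ₖ (B ⊗ₖ 1)) * (1 ⊗ₖ (1 ⊗ₖ C)) =
      A ⊗ₖ (B ⊗ₖ C) := by
    simp only [← mul_kronecker_mul, Matrix.one_mul, Matrix.mul_one]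
  rw [← hsa.adjoint_eq, ContinuousLinearMap.adjoint_inner_left, ← mul_apply_eq_comp,
    ← mul_apply_eq_comp, ← map_mul, ← map_mul, hmul, toEuclideanCLM_toLp,
    EuclideanSpace.inner_toLp_toLp]
  simp only [dotProduct, mulVec, kroneckerMap_apply, Finset.sum_mul, Pi.star_apply]
  refine Finset.sum_congr rfl fun p _ => Finset.sum_congr rfl fun q _ => ?_
  rw [Complex.star_def]
  ring

/-- For any 3-player XOR game with at most `Q` questions per player
(given by the tensor `T`), the entangled bias is at most `√Q · K_G^ℝ` times the classical
bias, where `K_G^ℝ` is (any constant satisfying) the real Grothendieck constant. -/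
theorem entangled_bias_le_sqrtQ_grothendieck
    (Q : ℕ) (T : Fin Q → Fin Q → Fin Q → ℝ) (K : ℝ)
    -- `K` satisfies Grothendieck's inequality: for any real matrix `M`, complex unit
    -- vectors `x i`, `y j`, and any upper bound `c` on the classical bilinear bias of `M`,
    -- `|∑ M i j ⟨x i, y j⟩| ≤ K c`.
    (hK : ∀ (d : ℕ) (M : Fin Q → Fin Q → ℝ) (x y : Fin Q → Fin d → ℂ),
      (∀ i, (∑ l, Complex.normSq (x i l)) = 1) →
      (∀ j, (∑ l, Complex.normSq (y j l)) = 1) →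
      ∀ c : ℝ, (∀ χ υ : Fin Q → ℝ, IsSign χ → IsSign υ →
          |∑ i, ∑ j, M i j * χ i * υ j| ≤ c) →
        ‖∑ i, ∑ j, (M i j : ℂ) *
          ∑ l, (starRingEnd ℂ) (x i l) * y j l‖ ≤ K * c)
    (β : ℝ)
    -- `β` is (an upper bound on) the classical bias of the game.
    (hβ : ∀ χ υ ζ : Fin Q → ℝ, IsSign χ → IsSign υ → IsSign ζ →
      ∑ i, ∑ j, ∑ k, T i j k * χ i * υ j * ζ k ≤ β) :
    -- Conclusion: every entangled strategy achieves bias at most `√Q · K · β`.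
    ∀ (d : ℕ) (ψ : Fin d × Fin d × Fin d → ℂ),
      (∑ p, Complex.normSq (ψ p)) = 1 →
      ∀ A B C : Fin Q → Matrix (Fin d) (Fin d) ℂ,
        (∀ i, IsObservable (A i)) → (∀ j, IsObservable (B j)) →
        (∀ k, IsObservable (C k)) →
        (∑ i, ∑ j, ∑ k, T i j k *
          (∑ p, ∑ q, (starRingEnd ℂ) (ψ p) *
            (A i p.1 q.1 * B j p.2.1 q.2.1 * C k p.2.2 q.2.2) * ψ q).re) ≤
          Real.sqrt Q * K * β := by
  intro d ψ hψ A B C hA hB hC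
  have hψ' := EuclideanSpace.norm_toLp_eq_one hψ
  have hunitary : ∀ M ∈ unitary (Matrix (Fin d × Fin d × Fin d) (Fin d × Fin d × Fin d) ℂ),
      toEuclideanCLM (𝕜 := ℂ) M ∈ unitary _ := fun _ hM => Unitary.map_mem _ hM
  let U : Fin Q → EuclideanSpace ℂ (Fin d × Fin d × Fin d) →ₗᵢ[ℂ] _ := fun j =>
    (Unitary.linearIsometryEquiv ⟨_, hunitary _ (kronecker_mem_unitary (one_mem _)
      (kronecker_mem_unitary (hB j).mem_unitary (one_mem _)))⟩).toLinearIsometry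
  have h := IsGrothendieckConstant.sum_re_inner_isometry_le hK hβ
    (fun i => toEuclideanCLM (𝕜 := ℂ) (A i ⊗ₖ 1) (WithLp.toLp 2 ψ))
    (fun k => toEuclideanCLM (𝕜 := ℂ) (1 ⊗ₖ (1 ⊗ₖ C k)) (WithLp.toLp 2 ψ)) U
    (fun i => by rw [ContinuousLinearMap.norm_map_of_mem_unitary
      (hunitary _ (kronecker_mem_unitary (hA i).mem_unitary (one_mem _))), hψ'])
    (fun k => by rw [ContinuousLinearMap.norm_map_of_mem_unitary
      (hunitary _ (kronecker_mem_unitary (one_mem _)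
        (kronecker_mem_unitary (one_mem _) (hC k).mem_unitary))), hψ'])
  simp only [sum_star_mul_kronecker_mul_eq_inner (hA _).1]
  exact h
end
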